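/- Let p ≥ 2 be a real number. There exists a constant C > 0 (depending only on p) such that for all ξ, η ∈ Matrix (Fin 3) (Fin 3) ℝ, |G_p(ξ) − G_p(η)| ≤ C(1 + ‖ξ‖ + ‖η‖)^{p−1}‖ξ − η‖, where G_p(ξ) := max(μ₁^{p/2} + μ₂^{p/2} + μ₃^{p/2} − 3, 0) and μ₁, μ₂, μ₃ are the (real) eigenvalues of the symmetric positive semidefinite matrix C̃(ξ) := (I₃ + ξ)ᵀ(I₃ + ξ). -/

import Mathlib

/-!
For `f` convex and `L`-Lipschitz on `[0, R]`, the eigenvalue sum `∑ f(μᵢ(A))` is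
`(card n * L)`-Lipschitz in the Frobenius norm on positive semidefinite matrices of norm at
most `R`: testing `B` on an orthonormal eigenbasis `(uᵢ)` of `A`, Peierls' inequality
`∑ f ⟪uᵢ, B uᵢ⟫ ≤ ∑ f(μᵢ(B))` reduces the difference to `L * ∑ |⟪uᵢ, (A - B) uᵢ⟫|`.
For `f = x ^ (p/2)`, `A = C̃(ξ)`, `B = C̃(η)` and `D = 1 + ‖ξ‖ + ‖η‖` one may take
`R = (2D)²` and `L = (p/2) (2D) ^ (p-2)`, while
`C̃(ξ) - C̃(η) = (1 + ξ)ᵀ(ξ - η) + (ξ - η)ᵀ(1 + η)` has norm at most `4D ‖ξ - η‖`;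
the truncation `max (· - 3) 0` is 1-Lipschitz.
-/

open Matrix

/-- The Frobenius norm of a real matrix: `‖ξ‖ = (tr(ξᵀξ))^(1/2)`. -/
noncomputable def frobNorm {M N : ℕ} (ξ : Matrix (Fin M) (Fin N) ℝ) : ℝ :=
  Real.sqrt ((ξᵀ * ξ).trace)

/-- The right Cauchy–Green tensor `C̃(ξ) = (I₃ + ξ)ᵀ(I₃ + ξ)`. -/
noncomputable def Ctil (ξ : Matrix (Fin 3) (Fin 3) ℝ) : Matrix (Fin 3) (Fin 3) ℝ :=
  (1 + ξ)ᵀ * (1 + ξ)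

/-- `C̃(ξ)` is a symmetric (hermitian) real matrix. -/
lemma Ctil_isHermitian (ξ : Matrix (Fin 3) (Fin 3) ℝ) : (Ctil ξ).IsHermitian := by
  have h := Matrix.isHermitian_conjTranspose_mul_self (1 + ξ)
  rwa [Matrix.conjTranspose_eq_transpose_of_trivial] at h

/-- The Ogden-type density `G_p(ξ) = max(μ₁^{p/2} + μ₂^{p/2} + μ₃^{p/2} − 3, 0)`,
where the `μᵢ` are the eigenvalues of `C̃(ξ)`. -/
noncomputable def Gp (p : ℝ) (ξ : Matrix (Fin 3) (Fin 3) ℝ) : ℝ :=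
  max ((∑ i, (Ctil_isHermitian ξ).eigenvalues i ^ (p / 2)) - 3) 0

open Set
open scoped InnerProductSpace Matrix.Norms.Frobenius NNReal

lemma frobNorm_eq_norm {M N : ℕ} (ξ : Matrix (Fin M) (Fin N) ℝ) : frobNorm ξ = ‖ξ‖ := by
  rw [frobNorm, frobenius_norm_def, ← Real.sqrt_eq_rpow, trace, Finset.sum_comm]
  simp [mul_apply, sq]

lemma Real.lipschitzOnWith_rpow_Icc {s R : ℝ} (hs : 1 ≤ s) (hR : 0 ≤ R) :
    LipschitzOnWith (s * R ^ (s - 1)).toNNReal (fun x : ℝ => x ^ s) (Icc 0 R) := by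
  refine (convex_Icc 0 R).lipschitzOnWith_of_nnnorm_hasDerivWithin_le
    (fun x _ => (Real.hasDerivAt_rpow_const (Or.inr hs)).hasDerivWithinAt) fun x hx => ?_
  rw [← NNReal.coe_le_coe, coe_nnnorm, Real.coe_toNNReal _ (by positivity),
    Real.norm_of_nonneg (by positivity [hx.1])]
  gcongr
  exacts [hx.1, hx.2]

namespace Matrix

variable {n : Type*} [Fintype n] [DecidableEq n]

lemma norm_toEuclideanLin_apply_le (A : Matrix n n ℝ) (x : EuclideanSpace ℝ n) :
    ‖toEuclideanLin A x‖ ≤ ‖A‖ * ‖x‖ := by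
  calc ‖toEuclideanLin A x‖ = ‖A * replicateCol Unit x.ofLp‖ := by
        rw [← replicateCol_mulVec, frobenius_norm_replicateCol]; rfl
    _ ≤ ‖A‖ * ‖x‖ := by
        grw [frobenius_norm_mul, frobenius_norm_replicateCol]

lemma abs_inner_toEuclideanLin_le (A : Matrix n n ℝ) (x : EuclideanSpace ℝ n) :
    |⟪x, toEuclideanLin A x⟫_ℝ| ≤ ‖A‖ * ‖x‖ ^ 2 :=
  calc |⟪x, toEuclideanLin A x⟫_ℝ| ≤ ‖x‖ * (‖A‖ * ‖x‖) := by
        grw [abs_real_inner_le_norm, norm_toEuclideanLin_apply_le]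
    _ = ‖A‖ * ‖x‖ ^ 2 := by ring

namespace IsHermitian

variable {A : Matrix n n ℝ} (hA : A.IsHermitian)
lemma toEuclideanLin_eigenvectorBasis (j : n) :
    toEuclideanLin A (hA.eigenvectorBasis j) = hA.eigenvalues j • hA.eigenvectorBasis j :=
  WithLp.ofLp_injective _ (hA.mulVec_eigenvectorBasis j)

lemma inner_toEuclideanLin_eigenvectorBasis (j : n) :
    ⟪hA.eigenvectorBasis j, toEuclideanLin A (hA.eigenvectorBasis j)⟫_ℝ = hA.eigenvalues j := by
  rw [hA.toEuclideanLin_eigenvectorBasis, real_inner_smul_right,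
    real_inner_self_eq_norm_sq, hA.eigenvectorBasis.orthonormal.1 j, one_pow, mul_one]

lemma inner_toEuclideanLin_self (x : EuclideanSpace ℝ n) :
    ⟪x, toEuclideanLin A x⟫_ℝ = ∑ j, hA.eigenvalues j * ⟪hA.eigenvectorBasis j, x⟫_ℝ ^ 2 := by
  have hsymm := isSymmetric_toEuclideanLin_iff.mpr hA
  rw [← hA.eigenvectorBasis.sum_inner_mul_inner]
  refine Finset.sum_congr rfl fun j _ => ?_
  rw [← hsymm, toEuclideanLin_eigenvectorBasis, real_inner_smul_left, real_inner_comm x]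
  ring

lemma sum_map_inner_le_sum_map_eigenvalues {s : Set ℝ} {f : ℝ → ℝ} (hf : ConvexOn ℝ s f)
    (hs : ∀ j, hA.eigenvalues j ∈ s) (u : OrthonormalBasis n ℝ (EuclideanSpace ℝ n)) :
    ∑ i, f ⟪u i, toEuclideanLin A (u i)⟫_ℝ ≤ ∑ j, f (hA.eigenvalues j) := by
  set b := hA.eigenvectorBasis
  -- Jensen, with the weights `⟪b j, u i⟫ ^ 2`, which are doubly stochastic
  have hJensen (i : n) :
      f ⟪u i, toEuclideanLin A (u i)⟫_ℝ ≤ ∑ j, ⟪b j, u i⟫_ℝ ^ 2 * f (hA.eigenvalues j) := by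
    rw [hA.inner_toEuclideanLin_self]
    simpa only [smul_eq_mul, mul_comm (hA.eigenvalues _)] using
      hf.map_sum_le (fun j _ => sq_nonneg _)
        (by rw [b.sum_sq_inner_right, (u.orthonormal.1 i), one_pow]) (fun j _ => hs j)
  calc ∑ i, f ⟪u i, toEuclideanLin A (u i)⟫_ℝ
      ≤ ∑ i, ∑ j, ⟪b j, u i⟫_ℝ ^ 2 * f (hA.eigenvalues j) := Finset.sum_le_sum fun i _ => hJensen i
    _ = ∑ j, (∑ i, ⟪u i, b j⟫_ℝ ^ 2) * f (hA.eigenvalues j) := by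
        rw [Finset.sum_comm]
        simp_rw [Finset.sum_mul, real_inner_comm]
    _ = ∑ j, f (hA.eigenvalues j) := by
        simp_rw [u.sum_sq_inner_right, b.orthonormal.1, one_pow, one_mul]

end IsHermitian

namespace PosSemidef

variable {A B : Matrix n n ℝ} {R : ℝ}

lemma inner_toEuclideanLin_mem_Icc (hA : A.PosSemidef) (hAR : ‖A‖ ≤ R)
    {x : EuclideanSpace ℝ n} (hx : ‖x‖ = 1) : ⟪x, toEuclideanLin A x⟫_ℝ ∈ Icc 0 R := by
  refine ⟨(isPositive_toEuclideanLin_iff.mpr hA).inner_nonneg_right x, ?_⟩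
  calc ⟪x, toEuclideanLin A x⟫_ℝ ≤ ‖A‖ * ‖x‖ ^ 2 :=
        (le_abs_self _).trans (abs_inner_toEuclideanLin_le A x)
    _ ≤ R := by rw [hx, one_pow, mul_one]; exact hAR

lemma eigenvalues_mem_Icc (hA : A.PosSemidef) (hAR : ‖A‖ ≤ R) (j : n) :
    hA.1.eigenvalues j ∈ Icc 0 R := by
  rw [← hA.1.inner_toEuclideanLin_eigenvectorBasis]
  exact hA.inner_toEuclideanLin_mem_Icc hAR (hA.1.eigenvectorBasis.orthonormal.1 j)

private lemma sum_map_eigenvalues_sub_le (hA : A.PosSemidef) (hB : B.PosSemidef)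
    (hAR : ‖A‖ ≤ R) (hBR : ‖B‖ ≤ R) {f : ℝ → ℝ} {L : ℝ≥0}
    (hconv : ConvexOn ℝ (Icc 0 R) f) (hlip : LipschitzOnWith L f (Icc 0 R)) :
    ∑ i, f (hA.1.eigenvalues i) - ∑ i, f (hB.1.eigenvalues i) ≤
      Fintype.card n * L * ‖A - B‖ := by
  set u := hA.1.eigenvectorBasis
  have hunit (i : n) : ‖u i‖ = 1 := u.orthonormal.1 i
  have hstep (i : n) : f (hA.1.eigenvalues i) - f ⟪u i, toEuclideanLin B (u i)⟫_ℝ ≤ L * ‖A - B‖ :=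
    calc f (hA.1.eigenvalues i) - f ⟪u i, toEuclideanLin B (u i)⟫_ℝ
        ≤ L * |hA.1.eigenvalues i - ⟪u i, toEuclideanLin B (u i)⟫_ℝ| := by
          simpa only [Real.dist_eq] using (le_abs_self _).trans (hlip.dist_le_mul _
            (hA.eigenvalues_mem_Icc hAR i) _ (hB.inner_toEuclideanLin_mem_Icc hBR (hunit i)))
      _ = L * |⟪u i, toEuclideanLin (A - B) (u i)⟫_ℝ| := by
          rw [← hA.1.inner_toEuclideanLin_eigenvectorBasis, map_sub, LinearMap.sub_apply,
            inner_sub_right]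
      _ ≤ L * ‖A - B‖ := by
          grw [abs_inner_toEuclideanLin_le, hunit, one_pow, mul_one]
  calc ∑ i, f (hA.1.eigenvalues i) - ∑ i, f (hB.1.eigenvalues i)
      ≤ ∑ i, f (hA.1.eigenvalues i) - ∑ i, f ⟪u i, toEuclideanLin B (u i)⟫_ℝ := by
        grw [hB.1.sum_map_inner_le_sum_map_eigenvalues hconv (hB.eigenvalues_mem_Icc hBR) u]
    _ ≤ ∑ _i : n, L * ‖A - B‖ := by
        rw [← Finset.sum_sub_distrib]
        exact Finset.sum_le_sum fun i _ => hstep i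
    _ = Fintype.card n * L * ‖A - B‖ := by simp [mul_assoc]

lemma abs_sum_map_eigenvalues_sub_le (hA : A.PosSemidef) (hB : B.PosSemidef)
    (hAR : ‖A‖ ≤ R) (hBR : ‖B‖ ≤ R) {f : ℝ → ℝ} {L : ℝ≥0}
    (hconv : ConvexOn ℝ (Icc 0 R) f) (hlip : LipschitzOnWith L f (Icc 0 R)) :
    |∑ i, f (hA.1.eigenvalues i) - ∑ i, f (hB.1.eigenvalues i)| ≤
      Fintype.card n * L * ‖A - B‖ := by
  rw [abs_sub_le_iff]
  exact ⟨sum_map_eigenvalues_sub_le hA hB hAR hBR hconv hlip,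
    norm_sub_rev A B ▸ sum_map_eigenvalues_sub_le hB hA hBR hAR hconv hlip⟩

end PosSemidef

end Matrix

lemma Ctil_posSemidef (ξ : Matrix (Fin 3) (Fin 3) ℝ) : (Ctil ξ).PosSemidef := by
  have h := posSemidef_conjTranspose_mul_self (1 + ξ)
  rwa [conjTranspose_eq_transpose_of_trivial] at h

lemma norm_one_add_le (ξ : Matrix (Fin 3) (Fin 3) ℝ) : ‖1 + ξ‖ ≤ 2 + ‖ξ‖ := by
  have h3 : ‖(1 : Matrix (Fin 3) (Fin 3) ℝ)‖ = √3 := by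
    simpa using congrArg NNReal.toReal (frobenius_nnnorm_one (n := Fin 3) (α := ℝ))
  have h32 : √3 ≤ 2 := Real.sqrt_le_iff.mpr ⟨by norm_num, by norm_num⟩
  grw [norm_add_le, h3, h32]

lemma norm_Ctil_le (ξ : Matrix (Fin 3) (Fin 3) ℝ) : ‖Ctil ξ‖ ≤ ‖1 + ξ‖ ^ 2 := by
  grw [Ctil, frobenius_norm_mul, frobenius_norm_transpose, sq]

lemma Ctil_sub_Ctil (ξ η : Matrix (Fin 3) (Fin 3) ℝ) :
    Ctil ξ - Ctil η = (1 + ξ)ᵀ * (ξ - η) + (ξ - η)ᵀ * (1 + η) := by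
  simp only [Ctil, transpose_add, transpose_sub]
  noncomm_ring

lemma norm_Ctil_sub_le (ξ η : Matrix (Fin 3) (Fin 3) ℝ) :
    ‖Ctil ξ - Ctil η‖ ≤ (‖1 + ξ‖ + ‖1 + η‖) * ‖ξ - η‖ := by
  grw [Ctil_sub_Ctil, norm_add_le, frobenius_norm_mul, frobenius_norm_mul,
    frobenius_norm_transpose, frobenius_norm_transpose]
  linarith

lemma abs_Gp_sub_le {p r : ℝ} (hp : 2 ≤ p) {ξ η : Matrix (Fin 3) (Fin 3) ℝ}
    (hξ : ‖1 + ξ‖ ≤ r) (hη : ‖1 + η‖ ≤ r) :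
    |Gp p ξ - Gp p η| ≤ 3 * p * (r ^ 2) ^ (p / 2 - 1) * r * ‖ξ - η‖ := by
  have hs : 1 ≤ p / 2 := by linarith
  have hr : 0 ≤ r := (norm_nonneg _).trans hξ
  have hconv := (convexOn_rpow hs).subset Icc_subset_Ici_self (convex_Icc 0 (r ^ 2))
  have hlip := Real.lipschitzOnWith_rpow_Icc hs (sq_nonneg r)
  have hL : 0 ≤ p / 2 * (r ^ 2) ^ (p / 2 - 1) := by positivity
  calc |Gp p ξ - Gp p η|
      ≤ |∑ i, (Ctil_posSemidef ξ).1.eigenvalues i ^ (p / 2)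
          - ∑ i, (Ctil_posSemidef η).1.eigenvalues i ^ (p / 2)| :=
        (abs_max_sub_max_le_abs _ _ _).trans_eq (by rw [sub_sub_sub_cancel_right])
    _ ≤ 3 * (p / 2 * (r ^ 2) ^ (p / 2 - 1)) * ‖Ctil ξ - Ctil η‖ := by
        simpa [Real.coe_toNNReal _ hL] using
          (Ctil_posSemidef ξ).abs_sum_map_eigenvalues_sub_le (Ctil_posSemidef η)
            (by grw [norm_Ctil_le, hξ]) (by grw [norm_Ctil_le, hη]) hconv hlip
    _ ≤ 3 * (p / 2 * (r ^ 2) ^ (p / 2 - 1)) * ((r + r) * ‖ξ - η‖) := by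
        grw [norm_Ctil_sub_le, hξ, hη]
    _ = 3 * p * (r ^ 2) ^ (p / 2 - 1) * r * ‖ξ - η‖ := by ring

/-- The local Lipschitz estimate for the Ogden-type density established in the
proof of Example 3. -/
theorem ogden_local_lipschitz (p : ℝ) (hp : 2 ≤ p) :
    ∃ C : ℝ, 0 < C ∧ ∀ ξ η : Matrix (Fin 3) (Fin 3) ℝ,
      |Gp p ξ - Gp p η| ≤
        C * (1 + frobNorm ξ + frobNorm η) ^ (p - 1) * frobNorm (ξ - η) := by
  refine ⟨3 * p * 2 ^ (p - 1), by positivity, fun ξ η => ?_⟩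
  simp only [frobNorm_eq_norm]
  set D := 1 + ‖ξ‖ + ‖η‖ with hD_def
  have hD : 0 < D := by positivity
  have hξ : ‖1 + ξ‖ ≤ 2 * D := by grw [norm_one_add_le]; linarith [norm_nonneg ξ, norm_nonneg η]
  have hη : ‖1 + η‖ ≤ 2 * D := by grw [norm_one_add_le]; linarith [norm_nonneg ξ, norm_nonneg η]
  have hpow : ((2 * D) ^ 2) ^ (p / 2 - 1) * (2 * D) = 2 ^ (p - 1) * D ^ (p - 1) := by
    rw [← Real.rpow_natCast, ← Real.rpow_mul (by positivity), ← Real.rpow_add_one (by positivity),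
      Real.mul_rpow zero_le_two hD.le]
    congr 2 <;> push_cast <;> ring
  calc |Gp p ξ - Gp p η| ≤ 3 * p * ((2 * D) ^ 2) ^ (p / 2 - 1) * (2 * D) * ‖ξ - η‖ :=
        abs_Gp_sub_le hp hξ hη
    _ = 3 * p * 2 ^ (p - 1) * D ^ (p - 1) * ‖ξ - η‖ := by
        linear_combination (3 * p * ‖ξ - η‖) * hpow
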